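/- arXiv:2601.15171 — 2 statements merged into one kernel-verified Lean document; each statement's English description precedes it below -/
import Mathlib

section
/- Let m ≥ 1 and q ∈ (0,1) satisfy 7 ≤ q(m+7) ≤ m. Then the binomial probability mass function p_k = C(m,k) q^k (1-q)^{m-k} satisfies p_k ≤ 3/√(m q (1-q)) for all k = 0,1,...,m. -/
open Finset
set_option maxHeartbeats 1000000

lemma sqrtpi_le_stirlingSeq (n : ℕ) (hn : 1 ≤ n) :
    Real.sqrt Real.pi ≤ Stirling.stirlingSeq n := by
  obtain ⟨k, rfl⟩ := Nat.exists_eq_add_of_le hn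
  have ht : Filter.Tendsto (Stirling.stirlingSeq ∘ Nat.succ) Filter.atTop
      (nhds (Real.sqrt Real.pi)) :=
    Stirling.tendsto_stirlingSeq_sqrt_pi.comp (Filter.tendsto_add_atTop_nat 1)
  have := Stirling.stirlingSeq'_antitone.le_of_tendsto ht k
  simpa [Nat.succ_eq_add_one, Nat.add_comm] using this

lemma stirling_low (n : ℕ) (hn : 1 ≤ n) :
    Real.sqrt Real.pi * (Real.sqrt (2*n) * ((n:ℝ)/Real.exp 1)^n) ≤ (Nat.factorial n : ℝ) := by
  have h := sqrtpi_le_stirlingSeq n hn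
  rw [Stirling.stirlingSeq] at h
  have hpos : 0 < Real.sqrt (2*n) * ((n:ℝ)/Real.exp 1)^n := by
    have : (0:ℝ) < n := by exact_mod_cast hn
    positivity
  rw [le_div_iff₀ hpos] at h
  exact h

lemma stirling_up (n : ℕ) (hn : 1 ≤ n) :
    (Nat.factorial n : ℝ) ≤ (Real.exp 1 / Real.sqrt 2) * (Real.sqrt (2*n) * ((n:ℝ)/Real.exp 1)^n) := by
  have h : Stirling.stirlingSeq n ≤ Stirling.stirlingSeq 1 := by
    obtain ⟨k, rfl⟩ := Nat.exists_eq_add_of_le hn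
    have := Stirling.stirlingSeq'_antitone (Nat.zero_le k)
    simpa [Nat.succ_eq_add_one, Nat.add_comm] using this
  rw [Stirling.stirlingSeq_one, Stirling.stirlingSeq] at h
  have hpos : 0 < Real.sqrt (2*n) * ((n:ℝ)/Real.exp 1)^n := by
    have : (0:ℝ) < n := by exact_mod_cast hn
    positivity
  rw [div_le_div_iff₀ hpos (by positivity)] at h
  rw [div_mul_eq_mul_div, le_div_iff₀ (by positivity : (0:ℝ) < Real.sqrt 2)]
  linarith


/-- Bound on the binomial probability mass function: if `7 ≤ q(m+7) ≤ m` then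
`C(m,k) q^k (1-q)^{m-k} ≤ 3/√(m q (1-q))` for all `0 ≤ k ≤ m`. -/
theorem stmt8 (m : ℕ) (hm : 1 ≤ m) (q : ℝ) (hq0 : 0 < q) (hq1 : q < 1)
    (h7 : 7 ≤ q * ((m : ℝ) + 7)) (hqm : q * ((m : ℝ) + 7) ≤ (m : ℝ))
    (k : ℕ) (hk : k ≤ m) :
    (m.choose k : ℝ) * q ^ k * (1 - q) ^ (m - k)
      ≤ 3 / Real.sqrt ((m : ℝ) * q * (1 - q)) := by
  have hq1' : 0 < 1 - q := by linarith
  set f : ℕ → ℝ := fun i => (m.choose i : ℝ) * q ^ i * (1 - q) ^ (m - i) with hf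
  set k0 : ℕ := ⌊((m:ℝ)+1)*q⌋₊ with hk0
  have hmq : 7*(1-q) ≤ (m:ℝ)*q := by nlinarith
  have hm1q : 7*q ≤ (m:ℝ)*(1-q) := by nlinarith
  have hx0 : (0:ℝ) ≤ ((m:ℝ)+1)*q := by positivity
  have hk0le : (k0:ℝ) ≤ ((m:ℝ)+1)*q := Nat.floor_le hx0
  have hk0lt : ((m:ℝ)+1)*q < (k0:ℝ) + 1 := Nat.lt_floor_add_one _
  have hk01 : 1 ≤ k0 := by
    apply Nat.le_floor
    push_cast
    nlinarith
  have hk0m : k0 < m := by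
    rw [hk0, Nat.floor_lt hx0]
    nlinarith
  have hcast : ∀ i : ℕ, i < m → (m.choose (i+1) : ℝ) * ((i:ℝ)+1) = (m.choose i : ℝ) * ((m:ℝ) - (i:ℝ)) := by
    intro i hi
    have h := Nat.choose_succ_right_eq m i
    have h2 : ((m:ℝ) - (i:ℝ)) = ((m - i : ℕ) : ℝ) := by
      rw [Nat.cast_sub hi.le]
    rw [h2]
    exact_mod_cast congrArg (Nat.cast : ℕ → ℝ) h
  have up : ∀ i, i + 1 ≤ k0 → f i ≤ f (i+1) := by
    intro i hi
    have him : i < m := by omega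
    have hc := hcast i him
    have hineq : ((i:ℝ)+1)*(1-q) ≤ ((m:ℝ)-(i:ℝ))*q := by
      have h3 : ((i:ℝ)+1) ≤ (k0:ℝ) := by exact_mod_cast hi
      nlinarith
    have hC : (0:ℝ) ≤ (m.choose i : ℝ) := by positivity
    have key : (m.choose i : ℝ) * (1-q) ≤ (m.choose (i+1):ℝ) * q := by
      have h2 : (m.choose i:ℝ)*(1-q)*((i:ℝ)+1) ≤ (m.choose (i+1):ℝ)*q*((i:ℝ)+1) := by
        nlinarith [mul_le_mul_of_nonneg_left hineq hC]
      exact le_of_mul_le_mul_right h2 (by positivity)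
    have hsub : m - i = (m - (i+1)) + 1 := by omega
    show (m.choose i : ℝ) * q^i * (1-q)^(m-i) ≤ (m.choose (i+1):ℝ)*q^(i+1)*(1-q)^(m-(i+1))
    rw [hsub, pow_succ, pow_succ]
    have h5 := mul_le_mul_of_nonneg_right key (show (0:ℝ) ≤ q^i*(1-q)^(m-(i+1)) by positivity)
    exact le_trans (le_of_eq (by ring)) (le_trans h5 (le_of_eq (by ring)))
  have down : ∀ i, k0 ≤ i → i < m → f (i+1) ≤ f i := by
    intro i hilow hi
    have hc := hcast i hi
    have hineq : ((m:ℝ)-(i:ℝ))*q ≤ ((i:ℝ)+1)*(1-q) := by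
      have h3 : (k0:ℝ) ≤ (i:ℝ) := by exact_mod_cast hilow
      nlinarith
    have hC : (0:ℝ) ≤ (m.choose i : ℝ) := by positivity
    have key : (m.choose (i+1):ℝ) * q ≤ (m.choose i : ℝ) * (1-q) := by
      have h2 : (m.choose (i+1):ℝ)*q*((i:ℝ)+1) ≤ (m.choose i:ℝ)*(1-q)*((i:ℝ)+1) := by
        nlinarith [mul_le_mul_of_nonneg_left hineq hC]
      exact le_of_mul_le_mul_right h2 (by positivity)
    have hsub : m - i = (m - (i+1)) + 1 := by omega
    show (m.choose (i+1):ℝ)*q^(i+1)*(1-q)^(m-(i+1)) ≤ (m.choose i : ℝ) * q^i * (1-q)^(m-i)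
    rw [hsub, pow_succ, pow_succ]
    have h5 := mul_le_mul_of_nonneg_right key (show (0:ℝ) ≤ q^i*(1-q)^(m-(i+1)) by positivity)
    exact le_trans (le_of_eq (by ring)) (le_trans h5 (le_of_eq (by ring)))
  have hup2 : ∀ d, f (k0 - d) ≤ f k0 := by
    intro d
    induction d with
    | zero => simp
    | succ n ih =>
      rcases le_or_gt (n+1) k0 with h | h
      · have h1 : f (k0 - (n+1)) ≤ f (k0 - (n+1) + 1) := up _ (by omega)
        rw [show k0 - (n+1) + 1 = k0 - n by omega] at h1
        exact h1.trans ih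
      · rw [show k0 - (n+1) = k0 - n by omega]
        exact ih
  have hdown2 : ∀ d, k0 + d ≤ m → f (k0 + d) ≤ f k0 := by
    intro d
    induction d with
    | zero => simp
    | succ n ih =>
      intro hdm
      have h1 : f (k0 + n + 1) ≤ f (k0 + n) := down _ (by omega) (by omega)
      rw [show k0 + (n+1) = k0 + n + 1 by omega]
      exact h1.trans (ih (by omega))
  have hmode : f k ≤ f k0 := by
    rcases le_total k k0 with h | h
    · have := hup2 (k0 - k)
      rwa [show k0 - (k0 - k) = k by omega] at this
    · have := hdown2 (k - k0) (by omega)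
      rwa [show k0 + (k - k0) = k by omega] at this
  refine hmode.trans ?_
  -- Step 2: bound f k0 using Stirling
  clear hmode hk hup2 hdown2 up down hcast k
  set e : ℝ := Real.exp 1 with he
  have he0 : (0:ℝ) < e := Real.exp_pos 1
  set b : ℕ := m - k0 with hb
  have hb1 : 1 ≤ b := by omega
  have habm : k0 + b = m := by omega
  have har : (0:ℝ) < (k0:ℝ) := by exact_mod_cast hk01
  have hbr : (0:ℝ) < (b:ℝ) := by exact_mod_cast hb1
  have hbrm : (b:ℝ) = (m:ℝ) - (k0:ℝ) := by
    rw [hb, Nat.cast_sub hk0m.le]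
  have hm0 : (0:ℝ) < (m:ℝ) := by positivity
  -- lower bounds on k0 and b
  have hA : (m:ℝ)*q/2 ≤ (k0:ℝ) := by nlinarith
  have hB : (m:ℝ)*(1-q)/2 ≤ (b:ℝ) := by nlinarith
  -- entropy bound
  have hEk : ((m:ℝ)*q/(k0:ℝ))^k0 ≤ Real.exp ((m:ℝ)*q - (k0:ℝ)) := by
    have ha1 : (m:ℝ)*q/(k0:ℝ) ≤ Real.exp ((m:ℝ)*q/(k0:ℝ) - 1) := by
      linarith [Real.add_one_le_exp ((m:ℝ)*q/(k0:ℝ) - 1)]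
    calc ((m:ℝ)*q/(k0:ℝ))^k0 ≤ (Real.exp ((m:ℝ)*q/(k0:ℝ) - 1))^k0 :=
          pow_le_pow_left₀ (by positivity) ha1 k0
      _ = Real.exp ((k0:ℝ) * ((m:ℝ)*q/(k0:ℝ) - 1)) := (Real.exp_nat_mul _ k0).symm
      _ = Real.exp ((m:ℝ)*q - (k0:ℝ)) := by
          congr 1
          field_simp
  have hEb : ((m:ℝ)*(1-q)/(b:ℝ))^b ≤ Real.exp ((m:ℝ)*(1-q) - (b:ℝ)) := by
    have ha1 : (m:ℝ)*(1-q)/(b:ℝ) ≤ Real.exp ((m:ℝ)*(1-q)/(b:ℝ) - 1) := by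
      linarith [Real.add_one_le_exp ((m:ℝ)*(1-q)/(b:ℝ) - 1)]
    calc ((m:ℝ)*(1-q)/(b:ℝ))^b ≤ (Real.exp ((m:ℝ)*(1-q)/(b:ℝ) - 1))^b :=
          pow_le_pow_left₀ (by positivity) ha1 b
      _ = Real.exp ((b:ℝ) * ((m:ℝ)*(1-q)/(b:ℝ) - 1)) := (Real.exp_nat_mul _ b).symm
      _ = Real.exp ((m:ℝ)*(1-q) - (b:ℝ)) := by
          congr 1
          field_simp
  have hE : ((m:ℝ)*q/(k0:ℝ))^k0 * ((m:ℝ)*(1-q)/(b:ℝ))^b ≤ 1 := by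
    calc ((m:ℝ)*q/(k0:ℝ))^k0 * ((m:ℝ)*(1-q)/(b:ℝ))^b
        ≤ Real.exp ((m:ℝ)*q - (k0:ℝ)) * Real.exp ((m:ℝ)*(1-q) - (b:ℝ)) :=
          mul_le_mul hEk hEb (by positivity) (by positivity)
      _ = Real.exp ((m:ℝ)*q - (k0:ℝ) + ((m:ℝ)*(1-q) - (b:ℝ))) := (Real.exp_add _ _).symm
      _ = 1 := by
          rw [show (m:ℝ)*q - (k0:ℝ) + ((m:ℝ)*(1-q) - (b:ℝ)) = 0 by rw [hbrm]; ring,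
            Real.exp_zero]
  -- Stirling bounds
  have hFm := stirling_up m hm
  have hFa := stirling_low k0 hk01
  have hFb := stirling_low b hb1
  have hchoose : (m.choose k0 : ℝ) = (Nat.factorial m : ℝ) /
      ((Nat.factorial k0 : ℝ) * (Nat.factorial b : ℝ)) := by
    rw [Nat.cast_choose ℝ hk0m.le]
  have hDApos : 0 < Real.sqrt Real.pi * (Real.sqrt (2*(k0:ℝ)) * ((k0:ℝ)/e)^k0) := by
    have := Real.pi_pos
    positivity
  have hDBpos : 0 < Real.sqrt Real.pi * (Real.sqrt (2*(b:ℝ)) * ((b:ℝ)/e)^b) := by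
    have := Real.pi_pos
    positivity
  have h5 : (m.choose k0 : ℝ) ≤ (e/Real.sqrt 2 * (Real.sqrt (2*(m:ℝ)) * ((m:ℝ)/e)^m)) /
      ((Real.sqrt Real.pi * (Real.sqrt (2*(k0:ℝ)) * ((k0:ℝ)/e)^k0)) *
       (Real.sqrt Real.pi * (Real.sqrt (2*(b:ℝ)) * ((b:ℝ)/e)^b))) := by
    rw [hchoose]
    refine div_le_div₀ (by positivity) hFm (by positivity) ?_
    exact mul_le_mul hFa hFb hDBpos.le (by positivity)
  have h6 : f k0 ≤ ((e/Real.sqrt 2 * (Real.sqrt (2*(m:ℝ)) * ((m:ℝ)/e)^m)) /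
      ((Real.sqrt Real.pi * (Real.sqrt (2*(k0:ℝ)) * ((k0:ℝ)/e)^k0)) *
       (Real.sqrt Real.pi * (Real.sqrt (2*(b:ℝ)) * ((b:ℝ)/e)^b)))) * q^k0 * (1-q)^b := by
    have : f k0 = (m.choose k0 : ℝ) * q^k0 * (1-q)^b := rfl
    rw [this]
    exact mul_le_mul_of_nonneg_right (mul_le_mul_of_nonneg_right h5 (by positivity))
      (by positivity)
  refine h6.trans ?_
  have hSpos : 0 < Real.sqrt ((m:ℝ)*q*(1-q)) := Real.sqrt_pos.mpr (by positivity)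
  rw [div_mul_eq_mul_div, div_mul_eq_mul_div, div_le_div_iff₀ (by positivity) hSpos]
  -- rewrite the square roots
  have hsq2m : Real.sqrt (2*(m:ℝ)) = Real.sqrt 2 * Real.sqrt (m:ℝ) :=
    Real.sqrt_mul (by norm_num) _
  have hsq2a : Real.sqrt (2*(k0:ℝ)) = Real.sqrt 2 * Real.sqrt (k0:ℝ) :=
    Real.sqrt_mul (by norm_num) _
  have hsq2b : Real.sqrt (2*(b:ℝ)) = Real.sqrt 2 * Real.sqrt (b:ℝ) :=
    Real.sqrt_mul (by norm_num) _
  have hpipi : Real.sqrt Real.pi * Real.sqrt Real.pi = Real.pi :=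
    Real.mul_self_sqrt Real.pi_pos.le
  have hsplit : ((m:ℝ)/e)^m = ((m:ℝ)/e)^k0 * ((m:ℝ)/e)^b := by
    rw [← pow_add, habm]
  have hsqrt2ne : Real.sqrt 2 ≠ 0 := by positivity
  -- the key scalar inequality
  have key1 : e * Real.sqrt (m:ℝ) * Real.sqrt ((m:ℝ)*q*(1-q)) ≤
      6 * Real.pi * (Real.sqrt (k0:ℝ) * Real.sqrt (b:ℝ)) := by
    rw [mul_assoc, ← Real.sqrt_mul hm0.le, ← Real.sqrt_mul har.le]
    have h1 : (m:ℝ)*((m:ℝ)*q*(1-q)) ≤ 4*((k0:ℝ)*(b:ℝ)) := by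
      nlinarith [mul_le_mul hA hB (by positivity : (0:ℝ) ≤ (m:ℝ)*(1-q)/2) har.le]
    have h2 : Real.sqrt ((m:ℝ)*((m:ℝ)*q*(1-q))) ≤ Real.sqrt (4*((k0:ℝ)*(b:ℝ))) :=
      Real.sqrt_le_sqrt h1
    rw [Real.sqrt_mul (by norm_num : (0:ℝ) ≤ 4),
      show Real.sqrt (4:ℝ) = 2 by
        rw [show (4:ℝ) = 2^2 by norm_num, Real.sqrt_sq (by norm_num : (0:ℝ) ≤ 2)]] at h2
    nlinarith [Real.exp_one_lt_d9, Real.pi_gt_three,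
      Real.sqrt_nonneg ((k0:ℝ)*(b:ℝ)), Real.sqrt_nonneg ((m:ℝ)*((m:ℝ)*q*(1-q))), h2, he0]
  -- the entropy inequality in product form
  have key2 : ((m:ℝ)*q/e)^k0 * ((m:ℝ)*(1-q)/e)^b ≤ ((k0:ℝ)/e)^k0 * ((b:ℝ)/e)^b := by
    have hDpos : (0:ℝ) < ((k0:ℝ)/e)^k0 * ((b:ℝ)/e)^b := by positivity
    have h := mul_le_mul_of_nonneg_right hE hDpos.le
    rw [one_mul] at h
    have hk0ne : ((k0:ℝ)) ≠ 0 := har.ne'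
    have hene : e ≠ 0 := he0.ne'
    have hbne : ((b:ℝ)) ≠ 0 := hbr.ne'
    have e1 : (m:ℝ)*q/e = ((m:ℝ)*q/(k0:ℝ)) * ((k0:ℝ)/e) := by field_simp
    have e2 : (m:ℝ)*(1-q)/e = ((m:ℝ)*(1-q)/(b:ℝ)) * ((b:ℝ)/e) := by field_simp
    calc ((m:ℝ)*q/e)^k0 * ((m:ℝ)*(1-q)/e)^b
        = (((m:ℝ)*q/(k0:ℝ))^k0 * ((m:ℝ)*(1-q)/(b:ℝ))^b) * (((k0:ℝ)/e)^k0 * ((b:ℝ)/e)^b) := by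
          rw [e1, e2, mul_pow, mul_pow]
          ring
      _ ≤ ((k0:ℝ)/e)^k0 * ((b:ℝ)/e)^b := h
  calc e/Real.sqrt 2 * (Real.sqrt (2*(m:ℝ)) * ((m:ℝ)/e)^m) * q^k0 * (1-q)^b *
        Real.sqrt ((m:ℝ)*q*(1-q))
      = (e * Real.sqrt (m:ℝ) * Real.sqrt ((m:ℝ)*q*(1-q))) *
        (((m:ℝ)*q/e)^k0 * ((m:ℝ)*(1-q)/e)^b) := by
        rw [hsq2m, hsplit]
        rw [show ((m:ℝ)*q/e)^k0 = ((m:ℝ)/e)^k0 * q^k0 by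
            rw [← mul_pow, div_mul_eq_mul_div],
          show ((m:ℝ)*(1-q)/e)^b = ((m:ℝ)/e)^b * (1-q)^b by
            rw [← mul_pow, div_mul_eq_mul_div]]
        field_simp
    _ ≤ (6 * Real.pi * (Real.sqrt (k0:ℝ) * Real.sqrt (b:ℝ))) *
        (((k0:ℝ)/e)^k0 * ((b:ℝ)/e)^b) := by
        refine mul_le_mul key1 key2 (by positivity) ?_
        have := Real.pi_pos
        positivity
    _ = 3 * (Real.sqrt Real.pi * (Real.sqrt (2*(k0:ℝ)) * ((k0:ℝ)/e)^k0) *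
        (Real.sqrt Real.pi * (Real.sqrt (2*(b:ℝ)) * ((b:ℝ)/e)^b))) := by
        rw [hsq2a, hsq2b]
        have h22 : Real.sqrt 2 * Real.sqrt 2 = 2 := Real.mul_self_sqrt (by norm_num)
        linear_combination (-3 * Real.sqrt Real.pi * Real.sqrt Real.pi * Real.sqrt (k0:ℝ) *
          Real.sqrt (b:ℝ) * ((k0:ℝ)/e)^k0 * ((b:ℝ)/e)^b) * h22 +
          (-6 * Real.sqrt (k0:ℝ) * Real.sqrt (b:ℝ) * ((k0:ℝ)/e)^k0 * ((b:ℝ)/e)^b) * hpipi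
end

section
/- Let ρ ∈ (0, 1/2], θ = arcsin√ρ, τ = ⌊π/(4θ)⌋, β = π/2 - 2τθ, φ = arccos(-tan β / tan 2θ), ψ = arccos(sin β / sin 2θ). In a 2-dimensional space with orthonormal basis {|u⟩, |g⟩} and |Y⟩ = sin θ|u⟩ + cos θ|g⟩, |N⟩ = cos θ|u⟩ - sin θ|g⟩, define D^φ = |u⟩⟨u| + e^{iφ}(I - |u⟩⟨u|), Ξ^ψ = e^{iψ}|Y⟩⟨Y| + |N⟩⟨N|. Then e^{i(π-ψ)} Ξ^{π+2ψ} D^{φ} (Ξ^π D^π)^τ |u⟩ = |g⟩. -/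
open Real
open scoped InnerProductSpace

/-! The Grover iterate `Ξ^π D^π` acts on `span {u, g}` as the rotation by `2θ`, so after `τ` steps
`u` has become `sin β • u - cos β • g`, where `β ∈ [0, 2θ)` is the angle still missing to reach `g`.
The phases `φ` and `ψ` are chosen so that, written in the basis `Y, N`, the vector
`D^φ (sin β • u - cos β • g)` equals `cos θ e^{-iψ} • Y + sin θ e^{iψ} • N`; then `Ξ^{π+2ψ}`
multiplies the `Y`-component by `-e^{2iψ}`, producing `-e^{iψ} • g`, and the global phase
`e^{i(π-ψ)}` cancels the factor. -/

theorem arcsin_sqrt_mem_Ioc {ρ : ℝ} (h0 : 0 < ρ) (h1 : ρ ≤ 1 / 2) :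
    arcsin √ρ ∈ Set.Ioc 0 (π / 4) := by
  refine ⟨arcsin_pos.2 (sqrt_pos.2 h0), ?_⟩
  rw [arcsin_le_iff_le_sin' ⟨by linarith [pi_pos], by linarith [pi_pos]⟩, sin_pi_div_four,
    sqrt_le_left (by positivity), div_pow, sq_sqrt zero_le_two]
  linarith

theorem sub_natFloor_div_mul_mem_Ico {a b : ℝ} (ha : 0 ≤ a) (hb : 0 < b) :
    a - ⌊a / b⌋₊ * b ∈ Set.Ico 0 b := by
  rw [natCast_floor_eq_intCast_floor (div_nonneg ha hb.le)]
  exact ⟨Int.sub_floor_div_mul_nonneg a hb, Int.sub_floor_div_mul_lt a hb⟩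

-- No side conditions: where a tangent or cosine vanishes, both sides are `0` by `x / 0 = 0`.
theorem neg_tan_div_tan (α β : ℝ) :
    -tan β / tan α = -(sin β * cos α) / (cos β * sin α) := by
  rw [tan_eq_sin_div_cos, tan_eq_sin_div_cos, neg_div, neg_div, div_div_div_eq]

section ArccosRatios

variable {α β : ℝ}

theorem sin_div_sin_mem_Icc (hβ : 0 ≤ β) (hβα : β < α) (hα : α ≤ π / 2) :
    sin β / sin α ∈ Set.Icc 0 1 := by
  have hsα : 0 < sin α := sin_pos_of_pos_of_lt_pi (by linarith) (by linarith [pi_pos])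
  refine ⟨div_nonneg (sin_nonneg_of_nonneg_of_le_pi hβ (by linarith [pi_pos])) hsα.le,
    (div_le_one hsα).2 ?_⟩
  exact sin_le_sin_of_le_of_le_pi_div_two (by linarith) hα hβα.le

theorem cos_sq_mul_one_sub_neg_tan_div_tan_sq (hβ : cos β ≠ 0) (hα : sin α ≠ 0) :
    cos β ^ 2 * (1 - (-tan β / tan α) ^ 2) = 1 - (sin β / sin α) ^ 2 := by
  rw [neg_tan_div_tan]
  field_simp
  linear_combination sin α ^ 2 * sin_sq_add_cos_sq β - sin β ^ 2 * sin_sq_add_cos_sq α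

theorem cos_mul_sin_arccos_neg_tan_div_tan (hβ : 0 ≤ β) (hβα : β < α) (hα : α ≤ π / 2) :
    cos β * sin (arccos (-tan β / tan α)) = sin (arccos (sin β / sin α)) := by
  have hcβ : 0 < cos β := cos_pos_of_mem_Ioo ⟨by linarith [pi_pos], by linarith⟩
  have hsα : 0 < sin α := sin_pos_of_pos_of_lt_pi (by linarith) (by linarith [pi_pos])
  rw [sin_arccos, sin_arccos, ← cos_sq_mul_one_sub_neg_tan_div_tan_sq hcβ.ne' hsα.ne',
    sqrt_mul (sq_nonneg _), sqrt_sq hcβ.le]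

theorem cos_mul_cos_arccos_neg_tan_div_tan (hβ : 0 ≤ β) (hβα : β < α) (hα : α ≤ π / 2) :
    cos β * cos (arccos (-tan β / tan α)) = -(sin β * cos α) / sin α := by
  have hcβ : 0 < cos β := cos_pos_of_mem_Ioo ⟨by linarith [pi_pos], by linarith⟩
  have hsα : 0 < sin α := sin_pos_of_pos_of_lt_pi (by linarith) (by linarith [pi_pos])
  have hx : |-tan β / tan α| ≤ 1 := by
    rw [← sq_le_one_iff_abs_le_one, ← sub_nonneg]
    obtain ⟨hy0, hy1⟩ := sin_div_sin_mem_Icc hβ hβα hα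
    refine nonneg_of_mul_nonneg_right ?_ (pow_pos hcβ 2)
    rw [cos_sq_mul_one_sub_neg_tan_div_tan_sq hcβ.ne' hsα.ne', sub_nonneg]
    exact pow_le_one₀ hy0 hy1
  rw [cos_arccos (abs_le.1 hx).1 (abs_le.1 hx).2, neg_tan_div_tan]
  field_simp

end ArccosRatios

section PhaseIdentities

variable {β θ φ ψ : ℝ}

theorem sin_mul_sin_sub_cos_mul_cexp_mul_cos (hs : sin θ ≠ 0) (hc : cos θ ≠ 0)
    (hψ : cos ψ = sin β / sin (2 * θ)) (hφc : cos β * cos φ = -(sin β * cos (2 * θ)) / sin (2 * θ))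
    (hφs : cos β * sin φ = sin ψ) :
    ↑(sin β) * ↑(sin θ) - ↑(cos β) * Complex.exp (φ * Complex.I) * ↑(cos θ)
      = ↑(cos θ) * (Complex.exp (ψ * Complex.I))⁻¹ := by
  have h_re : sin β * sin θ - cos β * cos φ * cos θ = cos θ * cos ψ := by
    rw [hφc, hψ, sin_two_mul, cos_two_mul']
    field_simp
    linear_combination sin β * sin_sq_add_cos_sq θ
  rw [← Complex.exp_neg, ← neg_mul, ← Complex.ofReal_neg, Complex.exp_ofReal_mul_I,
    Complex.exp_ofReal_mul_I, cos_neg, sin_neg, Complex.ofReal_neg]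
  have h_re' := congrArg Complex.ofReal h_re
  have h_im' := congrArg Complex.ofReal hφs
  simp only [Complex.ofReal_mul, Complex.ofReal_sub] at h_re' h_im'
  linear_combination h_re' - ↑(cos θ) * Complex.I * h_im'

theorem sin_mul_cos_add_cos_mul_cexp_mul_sin (hs : sin θ ≠ 0) (hc : cos θ ≠ 0)
    (hψ : cos ψ = sin β / sin (2 * θ)) (hφc : cos β * cos φ = -(sin β * cos (2 * θ)) / sin (2 * θ))
    (hφs : cos β * sin φ = sin ψ) :
    ↑(sin β) * ↑(cos θ) + ↑(cos β) * Complex.exp (φ * Complex.I) * ↑(sin θ)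
      = Complex.exp (ψ * Complex.I) * ↑(sin θ) := by
  have h_re : sin β * cos θ + cos β * cos φ * sin θ = cos ψ * sin θ := by
    rw [hφc, hψ, sin_two_mul, cos_two_mul']
    field_simp
    linear_combination sin β * sin_sq_add_cos_sq θ
  rw [Complex.exp_ofReal_mul_I, Complex.exp_ofReal_mul_I]
  have h_re' := congrArg Complex.ofReal h_re
  have h_im' := congrArg Complex.ofReal hφs
  simp only [Complex.ofReal_mul, Complex.ofReal_add] at h_re' h_im'
  linear_combination h_re' + ↑(sin θ) * Complex.I * h_im'

end PhaseIdentities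

section GroverRotation

variable {V : Type*} [AddCommGroup V] [Module ℂ V] {u g Y N : V}

theorem sin_cos_reflection_symm {θ : ℝ} (hY : Y = (sin θ : ℂ) • u + (cos θ : ℂ) • g)
    (hN : N = (cos θ : ℂ) • u - (sin θ : ℂ) • g) :
    u = (sin θ : ℂ) • Y + (cos θ : ℂ) • N ∧ g = (cos θ : ℂ) • Y - (sin θ : ℂ) • N := by
  have h : (sin θ : ℂ) ^ 2 + (cos θ : ℂ) ^ 2 = 1 := by exact_mod_cast sin_sq_add_cos_sq θ
  subst hY hN
  constructor
  · linear_combination (norm := module) -(h • u)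
  · linear_combination (norm := module) -(h • g)

theorem grover_iterate_apply {θ : ℝ} {Dπ Ξπ : V →ₗ[ℂ] V} (hY : Y = (sin θ : ℂ) • u + (cos θ : ℂ) • g)
    (hN : N = (cos θ : ℂ) • u - (sin θ : ℂ) • g) (hDπu : Dπ u = u) (hDπg : Dπ g = -g)
    (hΞπN : Ξπ N = N) (hΞπY : Ξπ Y = -Y) :
    (Ξπ ∘ₗ Dπ) u = (cos (2 * θ) : ℂ) • u - (sin (2 * θ) : ℂ) • g ∧
      (Ξπ ∘ₗ Dπ) g = (sin (2 * θ) : ℂ) • u + (cos (2 * θ) : ℂ) • g := by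
  obtain ⟨hu, hg⟩ := sin_cos_reflection_symm hY hN
  rw [LinearMap.comp_apply, LinearMap.comp_apply, hDπu, hDπg, map_neg, cos_two_mul', sin_two_mul]
  nth_rw 1 [hu]
  nth_rw 2 [hg]
  simp only [map_add, map_sub, map_smul, hΞπN, hΞπY]
  constructor <;> (rw [hY, hN]; match_scalars) <;> ring

theorem rotation_pow_apply {G : V →ₗ[ℂ] V} {α : ℝ}
    (hu : G u = (cos α : ℂ) • u - (sin α : ℂ) • g) (hg : G g = (sin α : ℂ) • u + (cos α : ℂ) • g)
    (k : ℕ) : (G ^ k) u = (cos (k * α) : ℂ) • u - (sin (k * α) : ℂ) • g := by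
  induction k with
  | zero => simp
  | succ k ih =>
    rw [pow_succ', Module.End.mul_apply, ih, map_sub, map_smul, map_smul, hu, hg, Nat.cast_succ,
      add_one_mul, cos_add, sin_add]
    match_scalars <;> ring

theorem neg_inv_smul_apply_eq {D Ξ : V →ₗ[ℂ] V} {s c a b z w : ℂ} (hw : w ≠ 0)
    (hu : u = s • Y + c • N) (hg : g = c • Y - s • N) (hDu : D u = u) (hDg : D g = z • g)
    (hΞN : Ξ N = N) (hΞY : Ξ Y = -w ^ 2 • Y)
    (hcY : a * s - b * z * c = c * w⁻¹) (hcN : a * c + b * z * s = w * s) :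
    -w⁻¹ • Ξ (D (a • u - b • g)) = g := by
  have hD : D (a • u - b • g) = (c * w⁻¹) • Y + (w * s) • N := by
    rw [map_sub, map_smul, map_smul, hDu, hDg, ← hcY, ← hcN, hu, hg]
    module
  rw [hD, map_add, map_smul, map_smul, hΞY, hΞN, hg]
  match_scalars <;> field_simp

end GroverRotation

theorem stmt12_general {H : Type*} [NormedAddCommGroup H] [InnerProductSpace ℂ H]
    (ρ : ℝ) (h0 : 0 < ρ) (h1 : ρ ≤ 1 / 2)
    (θ : ℝ) (hθ : θ = arcsin (Real.sqrt ρ))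
    (τ : ℕ) (hτ : τ = ⌊π / (4 * θ)⌋₊)
    (β : ℝ) (hβ : β = π / 2 - 2 * τ * θ)
    (φ : ℝ) (hφ : φ = arccos (-tan β / tan (2 * θ)))
    (ψ : ℝ) (hψ : ψ = arccos (sin β / sin (2 * θ)))
    (u g : H)
    (Y N : H)
    (hY : Y = (Real.sin θ : ℂ) • u + (Real.cos θ : ℂ) • g)
    (hN : N = (Real.cos θ : ℂ) • u - (Real.sin θ : ℂ) • g)
    (Dφ Dπ Ξπ Ξψ : H →ₗ[ℂ] H)
    (hDφu : Dφ u = u) (hDφg : Dφ g = Complex.exp (φ * Complex.I) • g)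
    (hDπu : Dπ u = u) (hDπg : Dπ g = -g)
    (hΞπN : Ξπ N = N) (hΞπY : Ξπ Y = -Y)
    (hΞψN : Ξψ N = N) (hΞψY : Ξψ Y = Complex.exp ((π + 2 * ψ) * Complex.I) • Y) :
    Complex.exp ((π - ψ) * Complex.I) • Ξψ (Dφ (((Ξπ ∘ₗ Dπ) ^ τ) u)) = g := by
  obtain ⟨hθ0, hθπ⟩ : θ ∈ Set.Ioc 0 (π / 4) := hθ ▸ arcsin_sqrt_mem_Ioc h0 h1
  obtain ⟨hβ0, hβθ⟩ : β ∈ Set.Ico 0 (2 * θ) := by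
    have : β = π / 2 - ⌊π / 2 / (2 * θ)⌋₊ * (2 * θ) := by
      rw [hβ, hτ, show π / (4 * θ) = π / 2 / (2 * θ) by ring]
      ring
    exact this ▸ sub_natFloor_div_mul_mem_Ico (by positivity) (by positivity)
  have hsθ : sin θ ≠ 0 := (sin_pos_of_pos_of_lt_pi hθ0 (by linarith [pi_pos])).ne'
  have hcθ : cos θ ≠ 0 := (cos_pos_of_mem_Ioo ⟨by linarith [pi_pos], by linarith⟩).ne'
  have hψc : cos ψ = sin β / sin (2 * θ) := by
    obtain ⟨hy0, hy1⟩ := sin_div_sin_mem_Icc hβ0 hβθ (by linarith)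
    rw [hψ, cos_arccos (by linarith) hy1]
  have hφc := hφ ▸ cos_mul_cos_arccos_neg_tan_div_tan hβ0 hβθ (by linarith)
  have hφs := hψ ▸ hφ ▸ cos_mul_sin_arccos_neg_tan_div_tan hβ0 hβθ (by linarith)
  obtain ⟨hu, hg⟩ := sin_cos_reflection_symm hY hN
  obtain ⟨hGu, hGg⟩ := grover_iterate_apply hY hN hDπu hDπg hΞπN hΞπY
  have hτθ : (τ : ℝ) * (2 * θ) = π / 2 - β := by rw [hβ]; ring
  have hexp : Complex.exp ((π - ψ) * Complex.I) = -(Complex.exp (ψ * Complex.I))⁻¹ := by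
    rw [sub_mul, Complex.exp_sub, Complex.exp_pi_mul_I, neg_div, one_div]
  have hexp2 : Complex.exp ((π + 2 * ψ) * Complex.I) = -Complex.exp (ψ * Complex.I) ^ 2 := by
    rw [add_mul, Complex.exp_add, Complex.exp_pi_mul_I, ← Complex.exp_nat_mul]
    push_cast
    ring_nf
  rw [rotation_pow_apply hGu hGg, hτθ, cos_pi_div_two_sub, sin_pi_div_two_sub, hexp]
  exact neg_inv_smul_apply_eq (Complex.exp_ne_zero _) hu hg hDφu hDφg hΞψN (hexp2 ▸ hΞψY)
    (sin_mul_sin_sub_cos_mul_cexp_mul_cos hsθ hcθ hψc hφc hφs)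
    (sin_mul_cos_add_cos_mul_cexp_mul_sin hsθ hcθ hψc hφc hφs)

/-- Exact Grover rotation identity (Claim 1 of the paper, restricted to the invariant
2-dimensional subspace): with `ρ ∈ (0,1/2]`, `θ = arcsin √ρ`, `τ = ⌊π/(4θ)⌋`,
`β = π/2 - 2τθ`, `φ = arccos(-tan β/tan 2θ)`, `ψ = arccos(sin β/sin 2θ)`, and
operators `D^φ` (`u ↦ u`, `g ↦ e^{iφ} g`), `D^π` (`u ↦ u`, `g ↦ -g`),
`Ξ^π` (`N ↦ N`, `Y ↦ -Y`), `Ξ^{π+2ψ}` (`N ↦ N`, `Y ↦ e^{i(π+2ψ)} Y`), we have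
`e^{i(π-ψ)} Ξ^{π+2ψ} D^φ (Ξ^π D^π)^τ u = g`. -/
theorem stmt12 {H : Type*} [NormedAddCommGroup H] [InnerProductSpace ℂ H]
    (ρ : ℝ) (h0 : 0 < ρ) (h1 : ρ ≤ 1 / 2)
    (θ : ℝ) (hθ : θ = arcsin (Real.sqrt ρ))
    (τ : ℕ) (hτ : τ = ⌊π / (4 * θ)⌋₊)
    (β : ℝ) (hβ : β = π / 2 - 2 * τ * θ)
    (φ : ℝ) (hφ : φ = arccos (-tan β / tan (2 * θ)))
    (ψ : ℝ) (hψ : ψ = arccos (sin β / sin (2 * θ)))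
    (u g : H) (hu : ‖u‖ = 1) (hg : ‖g‖ = 1) (hug : ⟪u, g⟫_ℂ = 0)
    (hspan : Submodule.span ℂ {u, g} = ⊤)
    (Y N : H)
    (hY : Y = (Real.sin θ : ℂ) • u + (Real.cos θ : ℂ) • g)
    (hN : N = (Real.cos θ : ℂ) • u - (Real.sin θ : ℂ) • g)
    (Dφ Dπ Ξπ Ξψ : H →ₗ[ℂ] H)
    (hDφu : Dφ u = u) (hDφg : Dφ g = Complex.exp (φ * Complex.I) • g)
    (hDπu : Dπ u = u) (hDπg : Dπ g = -g)
    (hΞπN : Ξπ N = N) (hΞπY : Ξπ Y = -Y)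
    (hΞψN : Ξψ N = N) (hΞψY : Ξψ Y = Complex.exp ((π + 2 * ψ) * Complex.I) • Y) :
    Complex.exp ((π - ψ) * Complex.I) • Ξψ (Dφ (((Ξπ ∘ₗ Dπ) ^ τ) u)) = g :=
  stmt12_general ρ h0 h1 θ hθ τ hτ β hβ φ hφ ψ hψ u g Y N hY hN Dφ Dπ Ξπ Ξψ hDφu hDφg hDπu hDπg hΞπN
    hΞπY hΞψN hΞψY
end
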